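/- Let S and A be finite nonempty sets, let T : S × A × S → ℝ be a transition kernel, let π and π' be policies with induced transition matrices P_π and P_{π'}, let γ ∈ [0,1), let h₀ be a probability vector on S, and let r : S × A → ℝ satisfy |r(s,a)| ≤ R_max with R_max ≥ 0. Define V_π = (1/(1−γ))·Σ_{(s,a)} ρ_π(s,a)·r(s,a) and V_{π'} = (1/(1−γ))·Σ_{(s,a)} ρ_{π'}(s,a)·r(s,a), where ρ_π(s,a) = π(a|s)·h_π(s) and h_π = (1−γ)·Σ_{t=0}^∞ γ^t P_π^t h₀ (and analogously for π'). Then |V_π − V_{π'}| ≤ (2·R_max/(1−γ)^2)·max_{s∈S} D_TV(π(·|s), π'(·|s)). -/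

import Mathlib

/-!
The discounted occupancy `h = (1 - γ) ∑ₜ γᵗ Pᵗ h₀` satisfies the flow equation
`h = (1 - γ) h₀ + γ P h`. Subtracting the equations for `π` and `π'` gives
`h - h' = γ (P (h - h') + (P - P') h')`. A column-stochastic `P` does not increase the ℓ¹ norm,
and every column of `P - P'` has ℓ¹ norm at most `2ε`, where `ε` is the largest total variation
distance between `π(·|s)` and `π'(·|s)`; hence `‖h - h'‖₁ ≤ γ ‖h - h'‖₁ + 2γε`, that is
`‖h - h'‖₁ ≤ 2γε / (1 - γ)`. The state-action occupancies then differ in ℓ¹ by at most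
`‖h - h'‖₁ + 2ε = 2ε / (1 - γ)`, and the values by `R_max / (1 - γ)` times that.
-/

open Finset Matrix

namespace Matrix

variable {S : Type*} [Fintype S]

theorem sum_abs_mulVec_le {M : Matrix S S ℝ} {c : ℝ} (hM : ∀ j, ∑ i, |M i j| ≤ c)
    (x : S → ℝ) : ∑ i, |(M *ᵥ x) i| ≤ c * ∑ j, |x j| := by
  calc ∑ i, |(M *ᵥ x) i| ≤ ∑ i, ∑ j, |M i j| * |x j| := by
        gcongr with i
        simpa only [mulVec, dotProduct, abs_mul] using
          abs_sum_le_sum_abs (fun j => M i j * x j) univ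
    _ = ∑ j, (∑ i, |M i j|) * |x j| := by rw [sum_comm]; simp only [sum_mul]
    _ ≤ ∑ j, c * |x j| := by gcongr with j; exact hM j
    _ = c * ∑ j, |x j| := (mul_sum _ _ _).symm

theorem mulVec_tsum_apply (M : Matrix S S ℝ) {f : ℕ → S → ℝ}
    (hf : ∀ j, Summable fun t => f t j) (i : S) :
    (M *ᵥ fun j => ∑' t, f t j) i = ∑' t, (M *ᵥ f t) i := by
  simp only [mulVec, dotProduct]
  rw [Summable.tsum_finsetSum fun j _ => (hf j).mul_left (M i j)]
  exact sum_congr rfl fun j _ => tsum_mul_left.symm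

variable [DecidableEq S]

theorem sum_abs_col_of_mem_colStochastic {M : Matrix S S ℝ} (hM : M ∈ colStochastic ℝ S)
    (j : S) : ∑ i, |M i j| = 1 := by
  simp_rw [abs_of_nonneg (nonneg_of_mem_colStochastic hM)]
  exact sum_col_of_mem_colStochastic hM j

end Matrix

section Occupancy

variable {S : Type*} [Fintype S] [DecidableEq S]

noncomputable def discountedOccupancy (P : Matrix S S ℝ) (γ : ℝ) (h₀ : S → ℝ) : S → ℝ :=
  fun s => (1 - γ) * ∑' t : ℕ, γ ^ t * (P ^ t *ᵥ h₀) s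

variable {P P' : Matrix S S ℝ} {γ : ℝ} {h₀ : S → ℝ}

theorem summable_discounted_mulVec_pow_apply (hP : P ∈ colStochastic ℝ S)
    (hγ0 : 0 ≤ γ) (hγ1 : γ < 1) (hh₀0 : ∀ s, 0 ≤ h₀ s) (hh₀1 : ∑ s, h₀ s = 1) (s : S) :
    Summable fun t : ℕ => γ ^ t * (P ^ t *ᵥ h₀) s := by
  have hnonneg t := nonneg_mulVec_of_mem_colStochastic (pow_mem hP t) hh₀0
  refine (summable_geometric_of_lt_one hγ0 hγ1).of_nonneg_of_le
    (fun t => mul_nonneg (pow_nonneg hγ0 t) (hnonneg t s)) fun t => ?_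
  have hle : (P ^ t *ᵥ h₀) s ≤ 1 := by
    rw [← hh₀1, ← sum_mulVec_of_mem_colStochastic (pow_mem hP t)]
    exact single_le_sum (fun s _ => hnonneg t s) (mem_univ s)
  simpa using mul_le_mul_of_nonneg_left hle (pow_nonneg hγ0 t)

theorem discountedOccupancy_nonneg (hP : P ∈ colStochastic ℝ S) (hγ0 : 0 ≤ γ)
    (hγ1 : γ < 1) (hh₀0 : ∀ s, 0 ≤ h₀ s) (s : S) : 0 ≤ discountedOccupancy P γ h₀ s :=
  mul_nonneg (by linarith) <| tsum_nonneg fun t =>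
    mul_nonneg (pow_nonneg hγ0 t) (nonneg_mulVec_of_mem_colStochastic (pow_mem hP t) hh₀0 s)

theorem sum_discountedOccupancy (hP : P ∈ colStochastic ℝ S) (hγ0 : 0 ≤ γ) (hγ1 : γ < 1)
    (hh₀0 : ∀ s, 0 ≤ h₀ s) (hh₀1 : ∑ s, h₀ s = 1) :
    ∑ s, discountedOccupancy P γ h₀ s = 1 := by
  have hsum := summable_discounted_mulVec_pow_apply hP hγ0 hγ1 hh₀0 hh₀1
  calc ∑ s, discountedOccupancy P γ h₀ s
      = (1 - γ) * ∑' t : ℕ, γ ^ t * ∑ s, (P ^ t *ᵥ h₀) s := by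
        unfold discountedOccupancy
        rw [← mul_sum, ← Summable.tsum_finsetSum fun s _ => hsum s]
        simp only [mul_sum]
    _ = (1 - γ) * ∑' t : ℕ, γ ^ t := by
        simp only [sum_mulVec_of_mem_colStochastic (pow_mem hP _), hh₀1, mul_one]
    _ = 1 := by
        rw [tsum_geometric_of_lt_one hγ0 hγ1]
        exact mul_inv_cancel₀ (by linarith)

theorem discountedOccupancy_eq_add_mulVec (hP : P ∈ colStochastic ℝ S) (hγ0 : 0 ≤ γ)
    (hγ1 : γ < 1) (hh₀0 : ∀ s, 0 ≤ h₀ s) (hh₀1 : ∑ s, h₀ s = 1) :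
    discountedOccupancy P γ h₀ =
      (1 - γ) • h₀ + γ • (P *ᵥ discountedOccupancy P γ h₀) := by
  have hsum := summable_discounted_mulVec_pow_apply hP hγ0 hγ1 hh₀0 hh₀1
  set W : S → ℝ := fun s => ∑' t : ℕ, γ ^ t * (P ^ t *ᵥ h₀) s
  have hW : discountedOccupancy P γ h₀ = (1 - γ) • W := rfl
  have hshift : W = h₀ + γ • (P *ᵥ W) := by
    funext s
    have hsucc (t : ℕ) : γ ^ (t + 1) * (P ^ (t + 1) *ᵥ h₀) s =
        γ * (P *ᵥ fun j => γ ^ t * (P ^ t *ᵥ h₀) j) s := by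
      rw [pow_succ' γ, pow_succ' P, ← mulVec_mulVec]
      change _ = γ * (P *ᵥ (γ ^ t • (P ^ t *ᵥ h₀))) s
      rw [mulVec_smul, Pi.smul_apply, smul_eq_mul, mul_assoc]
    simp only [W, Pi.add_apply, Pi.smul_apply, smul_eq_mul, (hsum s).tsum_eq_zero_add,
      hsucc, tsum_mul_left, mulVec_tsum_apply P hsum]
    simp only [pow_zero, one_mulVec, one_mul]
  rw [hW, mulVec_smul]
  nth_rewrite 1 [hshift]
  rw [smul_add, smul_comm (1 - γ) γ]

theorem sum_abs_sub_discountedOccupancy_le (hP : P ∈ colStochastic ℝ S)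
    (hP' : P' ∈ colStochastic ℝ S) (hγ0 : 0 ≤ γ) (hγ1 : γ < 1) (hh₀0 : ∀ s, 0 ≤ h₀ s)
    (hh₀1 : ∑ s, h₀ s = 1) {δ : ℝ} (hδ : ∀ j, ∑ i, |P i j - P' i j| ≤ δ) :
    ∑ s, |discountedOccupancy P γ h₀ s - discountedOccupancy P' γ h₀ s| ≤ γ * δ / (1 - γ) := by
  set h := discountedOccupancy P γ h₀
  set h' := discountedOccupancy P' γ h₀
  set D := ∑ s, |h s - h' s|
  have hdiff : h - h' = γ • (P *ᵥ (h - h') + (P - P') *ᵥ h') := by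
    rw [mulVec_sub, sub_mulVec]
    linear_combination (norm := module)
      discountedOccupancy_eq_add_mulVec hP hγ0 hγ1 hh₀0 hh₀1 -
        discountedOccupancy_eq_add_mulVec hP' hγ0 hγ1 hh₀0 hh₀1
  have hPd : ∑ s, |(P *ᵥ (h - h')) s| ≤ D := by
    simpa using sum_abs_mulVec_le (fun j => (sum_abs_col_of_mem_colStochastic hP j).le) (h - h')
  have hPh' : ∑ s, |((P - P') *ᵥ h') s| ≤ δ := by
    have hmass : ∑ s, |h' s| = 1 := by
      rw [← sum_discountedOccupancy hP' hγ0 hγ1 hh₀0 hh₀1]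
      exact sum_congr rfl fun s _ =>
        abs_of_nonneg (discountedOccupancy_nonneg hP' hγ0 hγ1 hh₀0 s)
    simpa [hmass] using sum_abs_mulVec_le (M := P - P') hδ h'
  have hrec : D ≤ γ * D + γ * δ := by
    calc D = ∑ s, |(h - h') s| := rfl
      _ = γ * ∑ s, |(P *ᵥ (h - h') + (P - P') *ᵥ h') s| := by
        conv_lhs => rw [hdiff]
        simp only [Pi.smul_apply, smul_eq_mul, abs_mul, abs_of_nonneg hγ0, mul_sum]
      _ ≤ γ * (∑ s, |(P *ᵥ (h - h')) s| + ∑ s, |((P - P') *ᵥ h') s|) := by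
        gcongr
        rw [← sum_add_distrib]
        exact sum_le_sum fun s _ => abs_add_le _ _
      _ ≤ γ * D + γ * δ := by rw [← mul_add]; gcongr
  rw [le_div_iff₀ (by linarith)]
  linarith

end Occupancy

section Policy

variable {S A : Type*} [Fintype S] [Fintype A]

def inducedMatrix (T : S → A → S → ℝ) (π : S → A → ℝ) : Matrix S S ℝ :=
  Matrix.of fun s' s => ∑ a, T s a s' * π s a

variable {T : S → A → S → ℝ} {π π' : S → A → ℝ}

theorem inducedMatrix_mem_colStochastic [DecidableEq S] (hT0 : ∀ s a s', 0 ≤ T s a s')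
    (hT1 : ∀ s a, ∑ s', T s a s' = 1) (hπ0 : ∀ s a, 0 ≤ π s a) (hπ1 : ∀ s, ∑ a, π s a = 1) :
    inducedMatrix T π ∈ colStochastic ℝ S := by
  refine mem_colStochastic_iff_sum.2 ⟨fun s' s => ?_, fun s => ?_⟩
  · exact sum_nonneg fun a _ => mul_nonneg (hT0 s a s') (hπ0 s a)
  · simp only [inducedMatrix, of_apply]
    rw [sum_comm]
    simp only [← sum_mul, hT1, one_mul, hπ1]

theorem sum_abs_sub_inducedMatrix_le (hT0 : ∀ s a s', 0 ≤ T s a s')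
    (hT1 : ∀ s a, ∑ s', T s a s' = 1) (s : S) :
    ∑ s', |inducedMatrix T π s' s - inducedMatrix T π' s' s| ≤ ∑ a, |π s a - π' s a| := by
  calc ∑ s', |inducedMatrix T π s' s - inducedMatrix T π' s' s|
      = ∑ s', |∑ a, T s a s' * (π s a - π' s a)| := by
        simp only [inducedMatrix, of_apply, ← sum_sub_distrib, mul_sub]
    _ ≤ ∑ s', ∑ a, T s a s' * |π s a - π' s a| := by
        gcongr with s'
        simpa only [abs_mul, abs_of_nonneg (hT0 s _ s')] using
          abs_sum_le_sum_abs (fun a => T s a s' * (π s a - π' s a)) univ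
    _ = ∑ a, |π s a - π' s a| := by
        rw [sum_comm]
        simp only [← sum_mul, hT1, one_mul]

theorem sum_sum_abs_mul_sub_mul_le (hπ0 : ∀ s a, 0 ≤ π s a) (hπ1 : ∀ s, ∑ a, π s a = 1)
    {δ : ℝ} (hδ : ∀ s, ∑ a, |π s a - π' s a| ≤ δ) {h h' : S → ℝ} (hh'0 : ∀ s, 0 ≤ h' s)
    (hh'1 : ∑ s, h' s = 1) :
    ∑ s, ∑ a, |π s a * h s - π' s a * h' s| ≤ ∑ s, |h s - h' s| + δ := by
  calc ∑ s, ∑ a, |π s a * h s - π' s a * h' s|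
      ≤ ∑ s, ∑ a, (π s a * |h s - h' s| + |π s a - π' s a| * h' s) := by
        gcongr with s _ a
        calc |π s a * h s - π' s a * h' s|
            = |π s a * (h s - h' s) + (π s a - π' s a) * h' s| := by ring_nf
          _ ≤ π s a * |h s - h' s| + |π s a - π' s a| * h' s := by
            simpa only [abs_mul, abs_of_nonneg (hπ0 s a), abs_of_nonneg (hh'0 s)] using
              abs_add_le (π s a * (h s - h' s)) ((π s a - π' s a) * h' s)
    _ = ∑ s, (|h s - h' s| + (∑ a, |π s a - π' s a|) * h' s) := by
        simp only [sum_add_distrib, ← sum_mul, hπ1, one_mul]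
    _ ≤ ∑ s, (|h s - h' s| + δ * h' s) := by
        gcongr with s
        · exact hh'0 s
        · exact hδ s
    _ = ∑ s, |h s - h' s| + δ := by
        rw [sum_add_distrib, ← mul_sum, hh'1, mul_one]

end Policy

theorem abs_sum_sum_mul_sub_sum_sum_mul_le {S A : Type*} [Fintype S] [Fintype A]
    {ρ ρ' r : S → A → ℝ} {R : ℝ} (hr : ∀ s a, |r s a| ≤ R) :
    |∑ s, ∑ a, ρ s a * r s a - ∑ s, ∑ a, ρ' s a * r s a| ≤
      R * ∑ s, ∑ a, |ρ s a - ρ' s a| := by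
  simp only [← sum_sub_distrib, ← sub_mul, mul_sum]
  refine (abs_sum_le_sum_abs _ _).trans <| sum_le_sum fun s _ =>
    (abs_sum_le_sum_abs _ _).trans <| sum_le_sum fun a _ => ?_
  rw [abs_mul, mul_comm R]
  exact mul_le_mul_of_nonneg_left (hr s a) (abs_nonneg _)

theorem value_difference_policy_bound_general {S A : Type*}
    [Fintype S] [Nonempty S] [DecidableEq S] [Fintype A]
    (T : S → A → S → ℝ)
    (hT0 : ∀ s a s', 0 ≤ T s a s')
    (hT1 : ∀ s a, ∑ s', T s a s' = 1)
    (π π' : S → A → ℝ)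
    (hπ0 : ∀ s a, 0 ≤ π s a) (hπ1 : ∀ s, ∑ a, π s a = 1)
    (hπ'0 : ∀ s a, 0 ≤ π' s a) (hπ'1 : ∀ s, ∑ a, π' s a = 1)
    (Pπ Pπ' : Matrix S S ℝ)
    (hPπ : ∀ s' s, Pπ s' s = ∑ a, T s a s' * π s a)
    (hPπ' : ∀ s' s, Pπ' s' s = ∑ a, T s a s' * π' s a)
    (γ : ℝ) (hγ : γ ∈ Set.Ico (0 : ℝ) 1)
    (h₀ : S → ℝ) (hh₀0 : ∀ s, 0 ≤ h₀ s) (hh₀1 : ∑ s, h₀ s = 1)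
    (r : S → A → ℝ) (Rmax : ℝ) (hRmax : 0 ≤ Rmax)
    (hr : ∀ s a, |r s a| ≤ Rmax)
    (hπocc hπ'occ : S → ℝ)
    (hocc : ∀ s, hπocc s = (1 - γ) * ∑' t : ℕ, γ ^ t * (Pπ ^ t).mulVec h₀ s)
    (hocc' : ∀ s, hπ'occ s = (1 - γ) * ∑' t : ℕ, γ ^ t * (Pπ' ^ t).mulVec h₀ s) :
    |(1 / (1 - γ)) * ∑ s, ∑ a, (π s a * hπocc s) * r s a -
        (1 / (1 - γ)) * ∑ s, ∑ a, (π' s a * hπ'occ s) * r s a| ≤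
      (2 * Rmax / (1 - γ) ^ 2) *
        Finset.univ.sup' Finset.univ_nonempty
          (fun s => (1 / 2) * ∑ a, |π s a - π' s a|) := by
  obtain ⟨hγ0, hγ1⟩ := hγ
  set ε := univ.sup' univ_nonempty fun s => (1 / 2) * ∑ a, |π s a - π' s a|
  have hTV (s : S) : ∑ a, |π s a - π' s a| ≤ 2 * ε := by
    have := le_sup' (fun s => (1 / 2) * ∑ a, |π s a - π' s a|) (mem_univ s)
    linarith
  obtain rfl : Pπ = inducedMatrix T π := Matrix.ext hPπ
  obtain rfl : Pπ' = inducedMatrix T π' := Matrix.ext hPπ'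
  obtain rfl : hπocc = discountedOccupancy (inducedMatrix T π) γ h₀ := funext hocc
  obtain rfl : hπ'occ = discountedOccupancy (inducedMatrix T π') γ h₀ := funext hocc'
  have hP := inducedMatrix_mem_colStochastic hT0 hT1 hπ0 hπ1
  have hP' := inducedMatrix_mem_colStochastic hT0 hT1 hπ'0 hπ'1
  have hstate := sum_abs_sub_discountedOccupancy_le hP hP' hγ0 hγ1 hh₀0 hh₀1
    fun s => (sum_abs_sub_inducedMatrix_le hT0 hT1 s).trans (hTV s)
  have hstateAction := sum_sum_abs_mul_sub_mul_le hπ0 hπ1 hTV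
    (h := discountedOccupancy (inducedMatrix T π) γ h₀)
    (discountedOccupancy_nonneg hP' hγ0 hγ1 hh₀0) (sum_discountedOccupancy hP' hγ0 hγ1 hh₀0 hh₀1)
  have h1γ : 0 < 1 - γ := by linarith
  rw [← mul_sub, abs_mul, abs_of_pos (one_div_pos.2 h1γ)]
  calc 1 / (1 - γ) * |_ - _|
      ≤ 1 / (1 - γ) * (Rmax * (γ * (2 * ε) / (1 - γ) + 2 * ε)) := by
        gcongr
        exact (abs_sum_sum_mul_sub_sum_sum_mul_le hr).trans <| by gcongr; linarith
    _ = 2 * Rmax / (1 - γ) ^ 2 * ε := by field_simp; ring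

/-- The discounted values of two policies differ by at most
`(2 R_max/(1-γ)²) maxₛ D_TV(π(·|s), π'(·|s))`. -/
theorem value_difference_policy_bound {S A : Type*}
    [Fintype S] [Nonempty S] [DecidableEq S] [Fintype A] [Nonempty A]
    (T : S → A → S → ℝ)
    (hT0 : ∀ s a s', 0 ≤ T s a s')
    (hT1 : ∀ s a, ∑ s', T s a s' = 1)
    (π π' : S → A → ℝ)
    (hπ0 : ∀ s a, 0 ≤ π s a) (hπ1 : ∀ s, ∑ a, π s a = 1)
    (hπ'0 : ∀ s a, 0 ≤ π' s a) (hπ'1 : ∀ s, ∑ a, π' s a = 1)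
    (Pπ Pπ' : Matrix S S ℝ)
    (hPπ : ∀ s' s, Pπ s' s = ∑ a, T s a s' * π s a)
    (hPπ' : ∀ s' s, Pπ' s' s = ∑ a, T s a s' * π' s a)
    (γ : ℝ) (hγ : γ ∈ Set.Ico (0 : ℝ) 1)
    (h₀ : S → ℝ) (hh₀0 : ∀ s, 0 ≤ h₀ s) (hh₀1 : ∑ s, h₀ s = 1)
    (r : S → A → ℝ) (Rmax : ℝ) (hRmax : 0 ≤ Rmax)
    (hr : ∀ s a, |r s a| ≤ Rmax)
    (hπocc hπ'occ : S → ℝ)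
    (hocc : ∀ s, hπocc s = (1 - γ) * ∑' t : ℕ, γ ^ t * (Pπ ^ t).mulVec h₀ s)
    (hocc' : ∀ s, hπ'occ s = (1 - γ) * ∑' t : ℕ, γ ^ t * (Pπ' ^ t).mulVec h₀ s) :
    |(1 / (1 - γ)) * ∑ s, ∑ a, (π s a * hπocc s) * r s a -
        (1 / (1 - γ)) * ∑ s, ∑ a, (π' s a * hπ'occ s) * r s a| ≤
      (2 * Rmax / (1 - γ) ^ 2) *
        Finset.univ.sup' Finset.univ_nonempty
          (fun s => (1 / 2) * ∑ a, |π s a - π' s a|) :=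
  value_difference_policy_bound_general T hT0 hT1 π π' hπ0 hπ1 hπ'0 hπ'1 Pπ Pπ' hPπ hPπ' γ hγ h₀
    hh₀0 hh₀1 r Rmax hRmax hr hπocc hπ'occ hocc hocc'
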